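/- For the first-order rogue wave u(x,t) of the MT model given by u = ρ1 e^{iφ0}[1 - (d2*(L1-d1) - d2(L1*+d1*) + |d2|²)/((L1-d1)(L1*+d1*) + d0²/4)] with L1 = (ρ2/ρ1)x + (4ρρ1d1²/ρ2)t, d1 = 1/(2(ρ̂+iρ)), d2 = 1/(ρ̂+iσρ1ρ2), d0 = 1/ρ̂, the value at the origin satisfies |u(0,0)| = 3|ρ1|. -/

import Mathlib

open Complex

noncomputable section

/-- `ρ = 1 + σρ1ρ2`. -/
def mtRho (ρ1 ρ2 σ : ℝ) : ℝ := 1 + σ * ρ1 * ρ2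

/-- `ρ̂ = √(-σρ1ρ2ρ)`. -/
def mtRhoHat (ρ1 ρ2 σ : ℝ) : ℝ := Real.sqrt (-(σ * ρ1 * ρ2 * mtRho ρ1 ρ2 σ))

/-- `d1 = 1/(2(ρ̂+iρ))`. -/
def mtD1 (ρ1 ρ2 σ : ℝ) : ℂ :=
  1 / (2 * ((mtRhoHat ρ1 ρ2 σ : ℂ) + Complex.I * (mtRho ρ1 ρ2 σ : ℝ)))

/-- `d2 = 1/(ρ̂+iσρ1ρ2)`. -/
def mtD2 (ρ1 ρ2 σ : ℝ) : ℂ :=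
  1 / ((mtRhoHat ρ1 ρ2 σ : ℂ) + Complex.I * ((σ * ρ1 * ρ2 : ℝ) : ℂ))

/-- `d0 = 1/ρ̂`. -/
def mtD0 (ρ1 ρ2 σ : ℝ) : ℂ := 1 / (mtRhoHat ρ1 ρ2 σ : ℂ)

/-- `L1 = (ρ2/ρ1)x + (4ρρ1d1²/ρ2)t`. -/
def mtL1 (ρ1 ρ2 σ : ℝ) (x t : ℝ) : ℂ :=
  ((ρ2 / ρ1 : ℝ) : ℂ) * (x : ℂ)
    + 4 * (mtRho ρ1 ρ2 σ : ℝ) * (ρ1 : ℂ) * (mtD1 ρ1 ρ2 σ) ^ 2 / (ρ2 : ℂ) * (t : ℂ)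

/-- `φ0 = ρ((ρ2/ρ1)x + (ρ1/ρ2)t)`. -/
def mtPhi0 (ρ1 ρ2 σ : ℝ) (x t : ℝ) : ℝ :=
  mtRho ρ1 ρ2 σ * ((ρ2 / ρ1) * x + (ρ1 / ρ2) * t)

/-- The first-order rogue wave `u(x,t)` of the massive Thirring model. -/
def mtU (ρ1 ρ2 σ : ℝ) (x t : ℝ) : ℂ :=
  (ρ1 : ℂ) * Complex.exp (Complex.I * (mtPhi0 ρ1 ρ2 σ x t : ℝ)) *
    (1 - ((starRingEnd ℂ) (mtD2 ρ1 ρ2 σ) * (mtL1 ρ1 ρ2 σ x t - mtD1 ρ1 ρ2 σ)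
          - mtD2 ρ1 ρ2 σ * ((starRingEnd ℂ) (mtL1 ρ1 ρ2 σ x t) + (starRingEnd ℂ) (mtD1 ρ1 ρ2 σ))
          + (‖mtD2 ρ1 ρ2 σ‖ : ℝ) ^ 2)
      / ((mtL1 ρ1 ρ2 σ x t - mtD1 ρ1 ρ2 σ)
          * ((starRingEnd ℂ) (mtL1 ρ1 ρ2 σ x t) + (starRingEnd ℂ) (mtD1 ρ1 ρ2 σ))
          + (mtD0 ρ1 ρ2 σ) ^ 2 / 4))

end

/-- For the first-order rogue wave `u(x,t)` of the MT model, the value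
at the origin satisfies `|u(0,0)| = 3|ρ1|` (the peak is three times the background). -/
theorem mt_first_order_peak (ρ1 ρ2 σ : ℝ) (hσ : σ = 1 ∨ σ = -1)
    (hρ1 : ρ1 ≠ 0) (hρ2 : ρ2 ≠ 0)
    (h : σ * ρ1 * ρ2 * (1 + σ * ρ1 * ρ2) < 0) :
    ‖mtU ρ1 ρ2 σ 0 0‖ = 3 * |ρ1| := by
  obtain ⟨a, ha⟩ : ∃ a : ℝ, σ * ρ1 * ρ2 = a := ⟨_, rfl⟩
  have hprod : a * (1 + a) < 0 := by rw [← ha]; exact h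
  have ha0 : a ≠ 0 := by intro h0; rw [h0] at hprod; simp at hprod
  have ha1 : (1 : ℝ) + a ≠ 0 := by rintro h1; nlinarith
  obtain ⟨s, hsdef⟩ : ∃ s : ℝ, mtRhoHat ρ1 ρ2 σ = s := ⟨_, rfl⟩
  have hs2 : s ^ 2 = -(a * (1 + a)) := by
    rw [← hsdef, mtRhoHat, mtRho, ha]
    exact Real.sq_sqrt (by nlinarith)
  have hs0 : 0 < s := by
    rw [← hsdef, mtRhoHat, mtRho, ha]
    exact Real.sqrt_pos.mpr (by nlinarith)
  have hsne : s ≠ 0 := ne_of_gt hs0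
  have hs2C : (s : ℂ) ^ 2 = -((a : ℂ) * (1 + a)) := by
    have := congrArg (Complex.ofReal) hs2
    push_cast at this ⊢
    exact_mod_cast this
  have hz1 : (s : ℂ) + Complex.I * (1 + (a:ℂ)) ≠ 0 := by
    intro hc
    have := congrArg Complex.re hc
    simp at this
    exact hsne this
  have hz1' : (s : ℂ) - Complex.I * (1 + (a:ℂ)) ≠ 0 := by
    intro hc
    have := congrArg Complex.re hc
    simp at this
    exact hsne this
  have hz2 : (s : ℂ) + Complex.I * (a : ℝ) ≠ 0 := by
    intro hc
    have := congrArg Complex.re hc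
    simp at this
    exact hsne this
  have hz2' : (s : ℂ) - Complex.I * (a : ℝ) ≠ 0 := by
    intro hc
    have := congrArg Complex.re hc
    simp at this
    exact hsne this
  have haC : (a:ℂ) ≠ 0 := by exact_mod_cast ha0
  have ha1C : (1:ℂ)+(a:ℂ) ≠ 0 := by exact_mod_cast ha1
  have hsC : (s : ℂ) ≠ 0 := by exact_mod_cast hsne
  have hD : (0 - 1/(2*((s:ℂ)+I*(1+a)))) * (0 + 1/(2*((s:ℂ)-I*(1+a)))) + (1/(s:ℂ))^2/4
      = -(1/(4*a)) := by
    field_simp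
    ring_nf
    linear_combination (4*((s:ℂ)^2+1+(a:ℂ))) * hs2C + (-4*(a:ℂ)-8*(a:ℂ)*(s:ℂ)^2-8*(a:ℂ)^2-4*(a:ℂ)^2*(s:ℂ)^2-4*(a:ℂ)^3-4*(s:ℂ)^2) * Complex.I_sq
  have hN : (1/((s:ℂ)-I*a)) * (0 - 1/(2*((s:ℂ)+I*(1+a)))) - (1/((s:ℂ)+I*a)) * (0 + 1/(2*((s:ℂ)-I*(1+a)))) + (1/((s:ℂ)+I*a))*(1/((s:ℂ)-I*a)) = -(1/a) := by
    have hP : ((s:ℂ) - I*a) * (2*((s:ℂ) + I*(1+a))) * (((s:ℂ) + I*a) * (2*((s:ℂ) - I*(1+a)))) * (((s:ℂ) + I*a) * ((s:ℂ) - I*a)) ≠ 0 := by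
      apply mul_ne_zero (mul_ne_zero (mul_ne_zero hz2' (mul_ne_zero two_ne_zero hz1)) (mul_ne_zero hz2 (mul_ne_zero two_ne_zero hz1'))) (mul_ne_zero hz2 hz2')
    field_simp
    linear_combination (2*((s:ℂ)^2+1+(a:ℂ)+(a:ℂ)^2)) * hs2C + ((-2*(a:ℂ)-2*(a:ℂ)^2-4*(a:ℂ)*(s:ℂ)^2-4*(a:ℂ)^2*(s:ℂ)^2-2*(s:ℂ)^2) + (2*(a:ℂ)^2+4*(a:ℂ)^3+2*(a:ℂ)^4)*(Complex.I^2-1)) * Complex.I_sq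
  have habs : ((‖mtD2 ρ1 ρ2 σ‖ : ℝ) : ℂ) ^ 2
      = mtD2 ρ1 ρ2 σ * (starRingEnd ℂ) (mtD2 ρ1 ρ2 σ) := by
    rw [Complex.mul_conj]
    norm_cast
    exact (Complex.sq_norm _).symm ▸ rfl
  have key : mtU ρ1 ρ2 σ 0 0 = (-3 : ℂ) * ρ1 := by
    rw [mtU, habs]
    simp only [mtL1, mtPhi0, mtD1, mtD2, mtD0, mtRho, ha, hsdef]
    push_cast
    simp only [Complex.ofReal_zero, mul_zero, zero_mul, add_zero, zero_add]
    simp only [Complex.exp_zero, map_zero, map_div₀, map_mul, map_add, map_one, map_sub,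
      map_ofNat, Complex.conj_I, Complex.conj_ofReal, mul_one, one_mul, neg_mul,
      ← sub_eq_add_neg]
    push_cast
    rw [hN, hD]
    have h4 : -(1/(a:ℂ)) / -(1/(4*a)) = 4 := by
      field_simp
    rw [h4]
    ring
  rw [key]
  rw [norm_mul, Complex.norm_real]
  norm_num
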